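/- There exists a set S of 4 unit vectors in ℝ³ whose point group is trivial (only the identity isometry preserves S) but which has strictly positive extracopularity coefficient E (i.e., fewer distinct bond angles than bond pairs). -/

import Mathlib

open scoped RealInnerProductSpace Classical

/-!
Take the three standard basis vectors together with `v = (2, 3, 6) / 7`. The six bond pairs
have cosines `0, 0, 0, 2/7, 3/7, 6/7`, so there are only four bond angles. An orthogonal map
preserving the set fixes the sum `w` of its elements and preserves inner products, so it maps
each bond to a bond with the same inner product with `w`; these inner products `9/7, 10/7, 13/7,
18/7` are distinct, so every bond is fixed, and since the bonds span ℝ³ the map is the identity.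
-/

section

variable {E : Type*} [NormedAddCommGroup E] [InnerProductSpace ℝ E]

theorem Finset.map_sum_eq_of_image_eq {M F : Type*} [AddCommMonoid M] [DecidableEq M] [FunLike F M M]
    [AddMonoidHomClass F M M] (f : F) (hf : Function.Injective f) {S : Finset M}
    (hS : S.image f = S) : f (∑ s ∈ S, s) = ∑ s ∈ S, s := by
  conv_rhs => rw [← hS]
  rw [map_sum, Finset.sum_image fun x _ y _ h => hf h]

theorem LinearIsometryEquiv.apply_eq_self_of_image_eq [DecidableEq E] {S : Finset E}
    (hS : Set.InjOn (fun s => ⟪s, ∑ t ∈ S, t⟫) S) (μ : E ≃ₗᵢ[ℝ] E) (hμ : S.image μ = S) :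
    ∀ s ∈ S, μ s = s := by
  intro s hs
  have hμs : μ s ∈ S := hμ ▸ Finset.mem_image_of_mem μ hs
  refine hS hμs hs ?_
  calc ⟪μ s, ∑ t ∈ S, t⟫ = ⟪μ s, μ (∑ t ∈ S, t)⟫ := by
        rw [Finset.map_sum_eq_of_image_eq μ μ.injective hμ]
    _ = ⟪s, ∑ t ∈ S, t⟫ := μ.inner_map_map s _

theorem LinearIsometryEquiv.eq_refl_of_image_eq [DecidableEq E] {S : Finset E}
    (hspan : Submodule.span ℝ (S : Set E) = ⊤) (hS : Set.InjOn (fun s => ⟪s, ∑ t ∈ S, t⟫) S)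
    (μ : E ≃ₗᵢ[ℝ] E) (hμ : S.image μ = S) : μ = LinearIsometryEquiv.refl ℝ E := by
  have h : (μ.toLinearEquiv : E →ₗ[ℝ] E) = LinearMap.id :=
    LinearMap.ext_on hspan (μ.apply_eq_self_of_image_eq hS hμ)
  exact LinearIsometryEquiv.ext (LinearMap.congr_fun h)

noncomputable def bondAngles (S : Finset E) : Finset ℝ :=
  S.offDiag.image fun p => Real.arccos ⟪p.1, p.2⟫

theorem bondAngles_nonempty {S : Finset E} (hS : 1 < S.card) : (bondAngles S).Nonempty := by
  obtain ⟨a, ha, b, hb, hab⟩ := Finset.one_lt_card.1 hS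
  exact ⟨_, Finset.mem_image_of_mem _ ((Finset.mem_offDiag (x := (a, b))).2 ⟨ha, hb, hab⟩)⟩

end

namespace SkewTetrad

noncomputable def bond : Fin 4 → EuclideanSpace ℝ (Fin 3) :=
  ![!₂[1, 0, 0], !₂[0, 1, 0], !₂[0, 0, 1], !₂[2/7, 3/7, 6/7]]

noncomputable def gram : Matrix (Fin 4) (Fin 4) ℝ :=
  !![1, 0, 0, 2/7; 0, 1, 0, 3/7; 0, 0, 1, 6/7; 2/7, 3/7, 6/7, 1]

noncomputable def bonds : Finset (EuclideanSpace ℝ (Fin 3)) := Finset.univ.image bond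

theorem inner_bond (i j : Fin 4) : ⟪bond i, bond j⟫ = gram i j := by
  fin_cases i <;> fin_cases j <;>
    simp only [bond, gram, PiLp.inner_apply, Fin.sum_univ_three] <;> norm_num [Matrix.cons_val_two]

theorem norm_bond (i : Fin 4) : ‖bond i‖ = 1 := by
  have h : gram i i = 1 := by fin_cases i <;> rfl
  rw [norm_eq_sqrt_real_inner, inner_bond, h, Real.sqrt_one]

theorem inner_bond_sum (i : Fin 4) : ⟪bond i, ∑ j, bond j⟫ = ∑ j, gram i j := by
  simp only [inner_sum, inner_bond]

theorem gram_row_sum_strictMono : StrictMono fun i => ∑ j, gram i j := by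
  refine Fin.strictMono_iff_lt_succ.2 fun i => ?_
  fin_cases i <;> simp [gram, Fin.sum_univ_four] <;> norm_num

theorem bond_injective : Function.Injective bond := fun i j h =>
  gram_row_sum_strictMono.injective (by simp only [← inner_bond_sum, h])

theorem card_bonds : bonds.card = 4 := by
  rw [bonds, Finset.card_image_of_injective _ bond_injective, Finset.card_univ, Fintype.card_fin]

theorem norm_of_mem_bonds : ∀ v ∈ bonds, ‖v‖ = 1 := by
  rintro _ hv
  obtain ⟨i, -, rfl⟩ := Finset.mem_image.1 hv
  exact norm_bond i

theorem sum_bonds : ∑ s ∈ bonds, s = ∑ i, bond i :=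
  Finset.sum_image fun _ _ _ _ h => bond_injective h

theorem injOn_inner_sum_bonds : Set.InjOn (fun s => ⟪s, ∑ t ∈ bonds, t⟫) bonds := by
  rintro _ hs _ ht h
  obtain ⟨i, -, rfl⟩ := Finset.mem_image.1 hs
  obtain ⟨j, -, rfl⟩ := Finset.mem_image.1 ht
  simp only [sum_bonds, inner_bond_sum] at h
  rw [gram_row_sum_strictMono.injective h]

theorem span_bonds : Submodule.span ℝ (bonds : Set (EuclideanSpace ℝ (Fin 3))) = ⊤ := by
  refine eq_top_mono (Submodule.span_mono ?_) (EuclideanSpace.basisFun (Fin 3) ℝ).toBasis.span_eq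
  rintro _ ⟨i, rfl⟩
  refine Finset.mem_image.2 ⟨i.castSucc, Finset.mem_univ _, ?_⟩
  fin_cases i <;> ext j <;> fin_cases j <;> simp [bond]

theorem gram_offDiag_mem : ∀ i j, i ≠ j → gram i j ∈ ({0, 2/7, 3/7, 6/7} : Finset ℝ) := by
  simp [Fin.forall_fin_succ, gram]

theorem card_bondAngles_bonds_le : (bondAngles bonds).card ≤ 4 := by
  have hsub : bondAngles bonds ⊆ ({0, 2/7, 3/7, 6/7} : Finset ℝ).image Real.arccos := by
    intro a ha
    obtain ⟨⟨_, _⟩, hp, rfl⟩ := Finset.mem_image.1 ha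
    obtain ⟨hs, ht, hst⟩ := Finset.mem_offDiag.1 hp
    obtain ⟨i, -, rfl⟩ := Finset.mem_image.1 hs
    obtain ⟨j, -, rfl⟩ := Finset.mem_image.1 ht
    exact Finset.mem_image_of_mem _
      (inner_bond i j ▸ gram_offDiag_mem i j (bond_injective.ne_iff.1 hst))
  exact (Finset.card_le_card hsub).trans (Finset.card_image_le.trans Finset.card_le_four)

end SkewTetrad

theorem exists_trivial_point_group_positive_extracopularity :
    ∃ S : Finset (EuclideanSpace ℝ (Fin 3)),
      S.card = 4 ∧ (∀ v ∈ S, ‖v‖ = 1) ∧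
      (∀ μ : EuclideanSpace ℝ (Fin 3) ≃ₗᵢ[ℝ] EuclideanSpace ℝ (Fin 3),
        S.image μ = S → μ = LinearIsometryEquiv.refl ℝ (EuclideanSpace ℝ (Fin 3))) ∧
      (S.offDiag.image (fun p => Real.arccos ⟪p.1, p.2⟫)).card < Nat.choose 4 2 ∧
      0 < Real.logb 2 (Nat.choose 4 2) -
          Real.logb 2 ((S.offDiag.image (fun p => Real.arccos ⟪p.1, p.2⟫)).card) := by
  have hm : (bondAngles SkewTetrad.bonds).card < Nat.choose 4 2 :=
    SkewTetrad.card_bondAngles_bonds_le.trans_lt (by decide)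
  have hm_pos : 0 < (bondAngles SkewTetrad.bonds).card :=
    (bondAngles_nonempty (by rw [SkewTetrad.card_bonds]; norm_num)).card_pos
  refine ⟨SkewTetrad.bonds, SkewTetrad.card_bonds, SkewTetrad.norm_of_mem_bonds,
    LinearIsometryEquiv.eq_refl_of_image_eq SkewTetrad.span_bonds
      SkewTetrad.injOn_inner_sum_bonds, hm, ?_⟩
  exact sub_pos.2 (Real.logb_lt_logb one_lt_two (Nat.cast_pos.2 hm_pos) (Nat.cast_lt.2 hm))
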